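/- Let H be a Hermitian matrix with spectral decomposition H = Σ_j λ_j |λ_j⟩⟨λ_j|, and let |A⟩, |B⟩ be unit vectors. If there exist t₀ > 0 and a phase φ such that exp(-iHt₀)|A⟩ = e^{iφ}|B⟩, then for all j, |⟨λ_j|A⟩| = |⟨λ_j|B⟩|, and for all j with ⟨λ_j|A⟩ ≠ 0, λ_j t₀ + φ + arg(⟨λ_j|B⟩/⟨λ_j|A⟩) ∈ 2πℤ. -/

import Mathlib

/-!
Because `H` is Hermitian with real eigenvalues, the bra `⟨λ_j|` is a left eigenvector of `H`,
hence of `exp(-iHt₀)` with eigenvalue `e^{-iλ_j t₀}`. Pairing the transfer equation with `⟨λ_j|`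
gives `⟨λ_j|B⟩ = e^{-i(λ_j t₀ + φ)} ⟨λ_j|A⟩`; taking moduli gives the first claim, and
`arg e^{iθ} ≡ θ (mod 2π)` the second.
-/

open Matrix

namespace Matrix

variable {ι : Type*} [Fintype ι]

theorem exp_mulVec_of_mulVec_eq_smul [DecidableEq ι] {M : Matrix ι ι ℂ} {w : ι → ℂ} {μ : ℂ}
    (h : M *ᵥ w = μ • w) : NormedSpace.exp M *ᵥ w = Complex.exp μ • w := by
  -- Any norm serves: it is only used to make the exponential series summable.
  let : NormedRing (Matrix ι ι ℂ) := Matrix.linftyOpNormedRing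
  let : NormedAlgebra ℂ (Matrix ι ι ℂ) := Matrix.linftyOpNormedAlgebra
  have pow_mulVec (k : ℕ) : M ^ k *ᵥ w = μ ^ k • w := by
    induction k with
    | zero => simp
    | succ k ih => rw [pow_succ', ← mulVec_mulVec, ih, mulVec_smul, h, smul_smul, ← pow_succ]
  let evalAt : Matrix ι ι ℂ →ₗ[ℂ] ι → ℂ := LinearMap.applyₗ w ∘ₗ toLin'.toLinearMap
  have lhs := (NormedSpace.exp_series_hasSum_exp' (𝕂 := ℂ) M).map evalAt
    (LinearMap.continuous_of_finiteDimensional evalAt)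
  have rhs := (NormedSpace.exp_series_hasSum_exp' (𝕂 := ℂ) μ).smul_const w
  rw [← Complex.exp_eq_exp_ℂ] at rhs
  refine lhs.unique ?_
  convert rhs using 2 with k
  simp only [Function.comp_apply, evalAt, LinearMap.comp_apply, LinearEquiv.coe_coe, toLin'_apply,
    LinearMap.applyₗ_apply_apply, smul_mulVec, pow_mulVec, smul_smul, smul_eq_mul]

theorem vecMul_exp_of_vecMul_eq_smul [DecidableEq ι] {M : Matrix ι ι ℂ} {u : ι → ℂ} {μ : ℂ}
    (h : u ᵥ* M = μ • u) : u ᵥ* NormedSpace.exp M = Complex.exp μ • u := by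
  have hT : Mᵀ *ᵥ u = μ • u := by rwa [← vecMul_transpose, transpose_transpose]
  rw [← transpose_transpose (NormedSpace.exp M), vecMul_transpose, ← exp_transpose]
  exact exp_mulVec_of_mulVec_eq_smul hT

theorem IsHermitian.star_vecMul_of_mulVec_eq_smul {H : Matrix ι ι ℂ} (hH : H.IsHermitian)
    {v : ι → ℂ} {r : ℝ} (h : H *ᵥ v = (r : ℂ) • v) : star v ᵥ* H = (r : ℂ) • star v := by
  rw [← hH.eq, ← star_mulVec, h, star_smul, Complex.star_def, Complex.conj_ofReal]

theorem IsHermitian.star_dotProduct_exp_smul_mulVec [DecidableEq ι] {H : Matrix ι ι ℂ}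
    (hH : H.IsHermitian) {v : ι → ℂ} {r : ℝ} (h : H *ᵥ v = (r : ℂ) • v) (c : ℂ) (x : ι → ℂ) :
    star v ⬝ᵥ NormedSpace.exp (c • H) *ᵥ x = Complex.exp (c * r) * (star v ⬝ᵥ x) := by
  have hc : star v ᵥ* (c • H) = (c * r) • star v := by
    rw [vecMul_smul, hH.star_vecMul_of_mulVec_eq_smul h, smul_smul]
  rw [dotProduct_mulVec, vecMul_exp_of_vecMul_eq_smul hc, smul_dotProduct, smul_eq_mul]

end Matrix

theorem Complex.exists_int_arg_exp_mul_I_eq (θ : ℝ) :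
    ∃ m : ℤ, Complex.arg (Complex.exp (θ * Complex.I)) = θ + 2 * Real.pi * m := by
  refine ⟨-toIocDiv Real.two_pi_pos (-Real.pi) θ, ?_⟩
  rw [Complex.arg_exp_mul_I, ← self_sub_toIocDiv_zsmul]
  push_cast
  ring

theorem pst_necessity_general {n : ℕ} (H : Matrix (Fin n) (Fin n) ℂ) (hH : H.IsHermitian)
    (lam : Fin n → ℝ) (v : Fin n → Fin n → ℂ)
    (heig : ∀ j, H.mulVec (v j) = (lam j : ℂ) • v j)
    (A B : Fin n → ℂ)
    (t₀ : ℝ) (φ : ℝ)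
    (hPST : (NormedSpace.exp ((-(Complex.I * t₀)) • H)).mulVec A
      = Complex.exp (Complex.I * φ) • B) :
    (∀ j, ‖star (v j) ⬝ᵥ A‖ = ‖star (v j) ⬝ᵥ B‖) ∧
    (∀ j, star (v j) ⬝ᵥ A ≠ 0 → ∃ m : ℤ,
      lam j * t₀ + φ + Complex.arg ((star (v j) ⬝ᵥ B) / (star (v j) ⬝ᵥ A))
        = 2 * Real.pi * m) := by
  have coeff_B (j : Fin n) : star (v j) ⬝ᵥ B
      = Complex.exp ((-(lam j * t₀ + φ) : ℝ) * Complex.I) * (star (v j) ⬝ᵥ A) := by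
    have h := hH.star_dotProduct_exp_smul_mulVec (heig j) (-(Complex.I * t₀)) A
    rw [hPST, dotProduct_smul, smul_eq_mul] at h
    rw [← mul_right_inj' (Complex.exp_ne_zero (Complex.I * φ)), h, ← mul_assoc,
      ← Complex.exp_add]
    congr 2
    push_cast
    ring
  refine ⟨fun j => ?_, fun j hA => ?_⟩
  · rw [coeff_B, norm_mul, Complex.norm_exp_ofReal_mul_I, one_mul]
  · obtain ⟨m, hm⟩ := Complex.exists_int_arg_exp_mul_I_eq (-(lam j * t₀ + φ))
    refine ⟨m, ?_⟩
    rw [coeff_B, mul_div_cancel_right₀ _ hA, hm]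
    ring

/-- Necessity direction of the spectral characterization of perfect state transfer:
if `exp(-iHt₀)|A⟩ = e^{iφ}|B⟩` for a Hermitian `H` with orthonormal eigenbasis `v` and
eigenvalues `lam`, then `|⟨λ_j|A⟩| = |⟨λ_j|B⟩|` for all `j`, and for all `j` with
`⟨λ_j|A⟩ ≠ 0`, `λ_j t₀ + φ + arg(⟨λ_j|B⟩/⟨λ_j|A⟩) ∈ 2πℤ`. -/
theorem pst_necessity {n : ℕ} (H : Matrix (Fin n) (Fin n) ℂ) (hH : H.IsHermitian)
    (lam : Fin n → ℝ) (v : Fin n → Fin n → ℂ)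
    (hortho : ∀ j k, star (v j) ⬝ᵥ v k = if j = k then 1 else 0)
    (heig : ∀ j, H.mulVec (v j) = (lam j : ℂ) • v j)
    (A B : Fin n → ℂ) (hA : star A ⬝ᵥ A = 1) (hB : star B ⬝ᵥ B = 1)
    (t₀ : ℝ) (ht₀ : 0 < t₀) (φ : ℝ)
    (hPST : (NormedSpace.exp ((-(Complex.I * t₀)) • H)).mulVec A
      = Complex.exp (Complex.I * φ) • B) :
    (∀ j, ‖star (v j) ⬝ᵥ A‖ = ‖star (v j) ⬝ᵥ B‖) ∧
    (∀ j, star (v j) ⬝ᵥ A ≠ 0 → ∃ m : ℤ,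
      lam j * t₀ + φ + Complex.arg ((star (v j) ⬝ᵥ B) / (star (v j) ⬝ᵥ A))
        = 2 * Real.pi * m) :=
  pst_necessity_general H hH lam v heig A B t₀ φ hPST
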